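/- arXiv:1709.01849 — 10 statements merged into one kernel-verified Lean document; each statement's English description precedes it below -/
import Mathlib

section
/- Let K be a finite Kripke structure, ρ and ρ' be two tracks over K, and k ∈ ℕ. If ρ and ρ' are k-equivalent, then ρ and ρ' are h-equivalent for every h with 0 ≤ h ≤ k. -/
open Classical

universe u v

structure KripkeStructure (AP : Type u) (W : Type v) where
  delta : W → W → Prop
  leftTotal : ∀ w, ∃ w', delta w w'
  mu : W → Set AP
  init : W

variable {AP : Type u} {W : Type v}

/-- A track over a Kripke structure: a finite sequence of at least two states
respecting the transition relation. -/
def IsTrack (K : KripkeStructure AP W) (ρ : List W) : Prop :=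
  2 ≤ ρ.length ∧ ρ.Chain' K.delta

/-- `σ` is a proper prefix (of length at least 2) of `ρ`, i.e. `σ ∈ Pref(ρ)`. -/
def ProperPrefix (σ ρ : List W) : Prop :=
  σ <+: ρ ∧ σ ≠ ρ ∧ 2 ≤ σ.length

/-- `σ` is a proper suffix (of length at least 2) of `ρ`, i.e. `σ ∈ Suff(ρ)`. -/
def ProperSuffix (σ ρ : List W) : Prop :=
  σ <:+ ρ ∧ σ ≠ ρ ∧ 2 ≤ σ.length

/-- Formulas of the HS fragment AĀBB̄Ē. -/
inductive HSFormula (AP : Type u) : Type u where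
  | prop (p : AP)
  | neg (φ : HSFormula AP)
  | and (φ ψ : HSFormula AP)
  | modA (φ : HSFormula AP)
  | modAbar (φ : HSFormula AP)
  | modB (φ : HSFormula AP)
  | modBbar (φ : HSFormula AP)
  | modEbar (φ : HSFormula AP)

/-- Satisfaction of an HS formula by a track, under the homogeneity assumption. -/
def sat (K : KripkeStructure AP W) : HSFormula AP → List W → Prop
  | .prop p, ρ => ∀ w ∈ ρ, p ∈ K.mu w
  | .neg φ, ρ => ¬ sat K φ ρ
  | .and φ ψ, ρ => sat K φ ρ ∧ sat K ψ ρ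
  | .modA φ, ρ => ∃ σ, IsTrack K σ ∧ σ.head? = ρ.getLast? ∧ sat K φ σ
  | .modAbar φ, ρ => ∃ σ, IsTrack K σ ∧ σ.getLast? = ρ.head? ∧ sat K φ σ
  | .modB φ, ρ => ∃ σ, ProperPrefix σ ρ ∧ sat K φ σ
  | .modBbar φ, ρ => ∃ σ, IsTrack K σ ∧ ProperPrefix ρ σ ∧ sat K φ σ
  | .modEbar φ, ρ => ∃ σ, IsTrack K σ ∧ ProperSuffix ρ σ ∧ sat K φ σ

/-- The B-nesting depth of an AĀBB̄Ē formula. -/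
def nestB : HSFormula AP → ℕ
  | .prop _ => 0
  | .neg φ => nestB φ
  | .and φ ψ => max (nestB φ) (nestB ψ)
  | .modA φ => nestB φ
  | .modAbar φ => nestB φ
  | .modB φ => 1 + nestB φ
  | .modBbar φ => nestB φ
  | .modEbar φ => nestB φ

namespace HSFormula

def firstLetter : HSFormula AP → AP
  | prop p => p
  | neg φ | and φ _ | modA φ | modAbar φ | modB φ | modBbar φ | modEbar φ => firstLetter φ

def noncontradiction (φ : HSFormula AP) : HSFormula AP :=
  neg (and φ (neg φ))

theorem nestB_modB_iterate (m : ℕ) (φ : HSFormula AP) : nestB (modB^[m] φ) = m + nestB φ := by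
  induction m with
  | zero => simp
  | succ m ih =>
    rw [Function.iterate_succ_apply', nestB, ih]
    omega

theorem nestB_and_noncontradiction (ψ φ : HSFormula AP) :
    nestB (and ψ (noncontradiction φ)) = max (nestB ψ) (nestB φ) := by
  simp [noncontradiction, nestB]

theorem sat_and_noncontradiction (K : KripkeStructure AP W) (ψ φ : HSFormula AP) (ρ : List W) :
    sat K (and ψ (noncontradiction φ)) ρ ↔ sat K ψ ρ := by
  simp [noncontradiction, sat]

/-- Pad `ψ` with the tautology `¬(φ ∧ ¬φ)` for `φ = Bᵏ p`; the letter `p` is taken from `ψ`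
because `AP` may be empty. -/
theorem exists_nestB_eq_and_sat_iff (ψ : HSFormula AP) {k : ℕ} (hk : nestB ψ ≤ k) :
    ∃ ψ' : HSFormula AP, nestB ψ' = k ∧
      ∀ (K : KripkeStructure AP W) (ρ : List W), sat K ψ' ρ ↔ sat K ψ ρ := by
  refine ⟨and ψ (noncontradiction (modB^[k] (prop (firstLetter ψ)))), ?_,
    fun K ρ ↦ sat_and_noncontradiction K _ _ ρ⟩
  rw [nestB_and_noncontradiction, nestB_modB_iterate, nestB]
  omega

end HSFormula

theorem kEquiv_downward_general (K : KripkeStructure AP W)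
    (ρ ρ' : List W) (k : ℕ)
    (hk : ∀ ψ : HSFormula AP, nestB ψ = k → (sat K ψ ρ ↔ sat K ψ ρ')) :
    ∀ h, h ≤ k → ∀ ψ : HSFormula AP, nestB ψ = h → (sat K ψ ρ ↔ sat K ψ ρ') := by
  rintro h hhk ψ rfl
  obtain ⟨ψ', hψ'k, hψ'ψ⟩ := ψ.exists_nestB_eq_and_sat_iff (W := W) hhk
  rw [← hψ'ψ K ρ, ← hψ'ψ K ρ']
  exact hk ψ' hψ'k

/-- k-equivalence propagates downwards: if `ρ` and `ρ'` satisfy the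
same AĀBB̄Ē formulas of B-nesting depth `k`, then for every `h ≤ k` they satisfy
the same formulas of B-nesting depth `h`. -/
theorem kEquiv_downward [Fintype W] (K : KripkeStructure AP W)
    (ρ ρ' : List W) (hρ : IsTrack K ρ) (hρ' : IsTrack K ρ') (k : ℕ)
    (hk : ∀ ψ : HSFormula AP, nestB ψ = k → (sat K ψ ρ ↔ sat K ψ ρ')) :
    ∀ h, h ≤ k → ∀ ψ : HSFormula AP, nestB ψ = h → (sat K ψ ρ ↔ sat K ψ ρ') :=
  kEquiv_downward_general K ρ ρ' k hk
end

section
/- Let k ∈ ℕ, K=(AP,W,δ,μ,v0) be a finite Kripke structure, and ρ1, ρ1', ρ2, ρ2' be tracks over K such that (lst(ρ1),fst(ρ1')) ∈ δ, (lst(ρ2),fst(ρ2')) ∈ δ, ρ1 ∼k ρ2, and ρ1' ∼k ρ2'. Then the concatenations satisfy ρ1·ρ1' ∼k ρ2·ρ2'. -/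
open Classical

universe u v

variable {AP : Type u} {W : Type v}

/-- A descriptor element: (initial state, set of internal states, final state). -/
abbrev DescEl (W : Type v) : Type v := W × Set W × W

noncomputable def headW [Nonempty W] (ρ : List W) : W :=
  ρ.headD (Classical.arbitrary W)

noncomputable def lastW [Nonempty W] (ρ : List W) : W :=
  ρ.getLastD (Classical.arbitrary W)

/-- The set of internal states of a track. -/
def intStates (ρ : List W) : Set W := {w | w ∈ (ρ.drop 1).dropLast}

/-- The descriptor element associated with a track. -/
noncomputable def descEl [Nonempty W] (ρ : List W) : DescEl W :=
  (headW ρ, intStates ρ, lastW ρ)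

/-- The type of B_k-descriptors (trees of depth `k` represented hereditarily as
sets of subtrees, which identifies isomorphic descriptors). -/
def BDesc (W : Type v) : ℕ → Type v
  | 0 => DescEl W
  | k + 1 => DescEl W × Set (BDesc W k)

/-- The B_k-descriptor of a track: the root is labelled by the descriptor element of
the track and, for `k > 0`, the subtrees of the root are exactly (one copy each)
the B_(k-1)-descriptors of the proper prefixes of the track. Two tracks are
k-descriptor equivalent (`ρ ∼k ρ'`) iff `bDesc k ρ = bDesc k ρ'`. -/
noncomputable def bDesc [Nonempty W] : (k : ℕ) → List W → BDesc W k
  | 0, ρ => descEl ρ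
  | k + 1, ρ => (descEl ρ, {d | ∃ σ, ProperPrefix σ ρ ∧ d = bDesc k σ})

/-!
A proper prefix of `ρ ++ τ`, for a track `ρ` and a nonempty `τ`, is a proper prefix of `ρ`,
or `ρ` itself, or `ρ ++ τ'` for a nonempty proper prefix `τ'` of `τ`; and the descriptor
element of `ρ ++ τ` is assembled from those of `ρ` and `τ`. By induction on `k`, the
`B_(k+1)`-equivalences `ρ₁ ∼ ρ₂` and `τ₁ ∼ τ₂` then give each proper prefix of `ρ₁ ++ τ₁` a
`B_k`-equivalent partner among the proper prefixes of `ρ₂ ++ τ₂`, and vice versa.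
-/

section Lists

variable {σ ρ τ : List W}

theorem properPrefix_append_iff (hρ : 2 ≤ ρ.length) (hτ : τ ≠ []) :
    ProperPrefix σ (ρ ++ τ) ↔
      ProperPrefix σ ρ ∨ σ = ρ ∨ ∃ τ', (τ' <+: τ ∧ τ' ≠ τ ∧ τ' ≠ []) ∧ σ = ρ ++ τ' := by
  constructor
  · rintro ⟨hpre, hne, hlen⟩
    rcases le_or_gt σ.length ρ.length with hσρ | hρσ
    · have hσ : σ <+: ρ := (List.isPrefix_append_of_length hσρ).mp hpre
      by_cases hσeq : σ = ρ
      · exact Or.inr (Or.inl hσeq)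
      · exact Or.inl ⟨hσ, hσeq, hlen⟩
    · obtain ⟨τ', rfl⟩ :=
        List.prefix_of_prefix_length_le (List.prefix_append ρ τ) hpre hρσ.le
      refine Or.inr (Or.inr ⟨τ', ⟨(List.prefix_append_right_inj ρ).mp hpre, ?_, ?_⟩, rfl⟩)
      · rintro rfl
        exact hne rfl
      · rintro rfl
        simp at hρσ
  · rintro (⟨hpre, hne, hlen⟩ | rfl | ⟨τ', ⟨hpre, hne, hnil⟩, rfl⟩)
    · refine ⟨hpre.trans (List.prefix_append ρ τ), fun h => ?_, hlen⟩
      have := congrArg List.length h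
      have := hpre.length_le
      have := List.length_pos_of_ne_nil hτ
      simp only [List.length_append] at *
      omega
    · exact ⟨List.prefix_append σ τ, by simpa using hτ.symm, hρ⟩
    · refine ⟨(List.prefix_append_right_inj ρ).mpr hpre, by simpa using hne, ?_⟩
      simp only [List.length_append]
      omega

theorem intStates_append (hρ : ρ ≠ []) (hτ : τ ≠ []) :
    intStates (ρ ++ τ) = {w | w ∈ ρ.tail} ∪ {w | w ∈ τ.dropLast} := by
  cases ρ with
  | nil => exact absurd rfl hρ
  | cons a l =>
    ext w
    simp [intStates, List.dropLast_append_of_ne_nil hτ]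

end Lists

section Tracks

variable [Nonempty W] {ρ τ : List W}

theorem headW_append (hρ : ρ ≠ []) (τ : List W) : headW (ρ ++ τ) = headW ρ := by
  cases ρ with
  | nil => exact absurd rfl hρ
  | cons a l => rfl

theorem lastW_append (ρ : List W) (hτ : τ ≠ []) : lastW (ρ ++ τ) = lastW τ := by
  simp [lastW, List.getLast?_append, List.getLast?_eq_some_getLast hτ]

theorem setOf_mem_tail (hρ : 2 ≤ ρ.length) :
    {w | w ∈ ρ.tail} = insert (lastW ρ) (intStates ρ) := by
  obtain ⟨a, l, b, rfl⟩ : ∃ a l b, ρ = a :: (l ++ [b]) := by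
    match ρ, hρ with
    | a :: m, hm =>
      have hm : m ≠ [] := by rintro rfl; simp at hm
      exact ⟨a, m.dropLast, m.getLast hm, by rw [List.dropLast_append_getLast]⟩
  have hlast : lastW (a :: (l ++ [b])) = b := by
    rw [lastW, ← List.cons_append, List.getLastD_concat]
  ext w
  simp [hlast, intStates, or_comm]

theorem setOf_mem_dropLast (hτ : 2 ≤ τ.length) :
    {w | w ∈ τ.dropLast} = insert (headW τ) (intStates τ) := by
  obtain ⟨a, b, l, rfl⟩ : ∃ a b l, τ = a :: b :: l := by
    match τ, hτ with
    | a :: b :: l, _ => exact ⟨a, b, l, rfl⟩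
  ext w
  simp [headW, intStates, eq_comm]

theorem descEl_eq_iff {ρ₁ ρ₂ : List W} : descEl ρ₁ = descEl ρ₂ ↔
    headW ρ₁ = headW ρ₂ ∧ intStates ρ₁ = intStates ρ₂ ∧ lastW ρ₁ = lastW ρ₂ := by
  simp [descEl]

theorem descEl_append (hρ : ρ ≠ []) (hτ : τ ≠ []) :
    descEl (ρ ++ τ) = (headW ρ, {w | w ∈ ρ.tail} ∪ {w | w ∈ τ.dropLast}, lastW τ) := by
  rw [descEl, headW_append hρ, intStates_append hρ hτ, lastW_append ρ hτ]

end Tracks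

namespace BDesc

def trunc : (k : ℕ) → BDesc W (k + 1) → BDesc W k
  | 0, d => d.1
  | k + 1, d => (d.1, trunc k '' d.2)

end BDesc

section Descriptors

variable [Nonempty W] {k : ℕ} {ρ₁ ρ₂ σ : List W}

theorem trunc_bDesc (k : ℕ) (ρ : List W) : BDesc.trunc k (bDesc (k + 1) ρ) = bDesc k ρ := by
  induction k generalizing ρ with
  | zero => rfl
  | succ k ih =>
    show (descEl ρ, BDesc.trunc k '' {d | ∃ σ, ProperPrefix σ ρ ∧ d = bDesc (k + 1) σ}) =
      (descEl ρ, {d | ∃ σ, ProperPrefix σ ρ ∧ d = bDesc k σ})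
    congr 1
    ext d
    simp [ih, eq_comm]

theorem bDesc_eq_of_bDesc_succ_eq (h : bDesc (k + 1) ρ₁ = bDesc (k + 1) ρ₂) :
    bDesc k ρ₁ = bDesc k ρ₂ := by
  simpa only [trunc_bDesc] using congrArg (BDesc.trunc k) h

theorem descEl_eq_of_bDesc_eq (h : bDesc k ρ₁ = bDesc k ρ₂) : descEl ρ₁ = descEl ρ₂ := by
  induction k with
  | zero => exact h
  | succ k ih => exact ih (bDesc_eq_of_bDesc_succ_eq h)

theorem exists_properPrefix_bDesc_eq (h : bDesc (k + 1) ρ₁ = bDesc (k + 1) ρ₂)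
    (hσ : ProperPrefix σ ρ₁) : ∃ σ', ProperPrefix σ' ρ₂ ∧ bDesc k σ = bDesc k σ' := by
  have hprefixes : {d | ∃ σ', ProperPrefix σ' ρ₁ ∧ d = bDesc k σ'} =
      {d | ∃ σ', ProperPrefix σ' ρ₂ ∧ d = bDesc k σ'} := congrArg Prod.snd h
  have hmem : bDesc k σ ∈ {d | ∃ σ', ProperPrefix σ' ρ₁ ∧ d = bDesc k σ'} := ⟨σ, hσ, rfl⟩
  rwa [hprefixes] at hmem

theorem bDesc_succ_eq_of_forall_exists (hroot : descEl ρ₁ = descEl ρ₂)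
    (h₁₂ : ∀ σ, ProperPrefix σ ρ₁ → ∃ σ', ProperPrefix σ' ρ₂ ∧ bDesc k σ = bDesc k σ')
    (h₂₁ : ∀ σ, ProperPrefix σ ρ₂ → ∃ σ', ProperPrefix σ' ρ₁ ∧ bDesc k σ = bDesc k σ') :
    bDesc (k + 1) ρ₁ = bDesc (k + 1) ρ₂ :=
  Prod.ext hroot <| Set.Subset.antisymm
    (by rintro _ ⟨σ, hσ, rfl⟩; exact h₁₂ σ hσ)
    (by rintro _ ⟨σ, hσ, rfl⟩; exact h₂₁ σ hσ)

end Descriptors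

section Concatenation

variable [Nonempty W] {k : ℕ} {ρ₁ ρ₂ τ' τ₁ τ₂ : List W}

/-- A prefix of `ρ ++ τ` strictly longer than `ρ` is `ρ ++ τ'` with `τ'` possibly a single
state, so the lists appended to tracks must include single states, compared by equality. -/
def ContinuationEquiv (k : ℕ) (τ₁ τ₂ : List W) : Prop :=
  (τ₁.length = 1 ∧ τ₁ = τ₂) ∨ (2 ≤ τ₁.length ∧ 2 ≤ τ₂.length ∧ bDesc k τ₁ = bDesc k τ₂)

namespace ContinuationEquiv

theorem symm (h : ContinuationEquiv k τ₁ τ₂) : ContinuationEquiv k τ₂ τ₁ := by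
  rcases h with ⟨hl, rfl⟩ | ⟨hl₁, hl₂, he⟩
  · exact Or.inl ⟨hl, rfl⟩
  · exact Or.inr ⟨hl₂, hl₁, he.symm⟩

theorem ne_nil_left (h : ContinuationEquiv k τ₁ τ₂) : τ₁ ≠ [] := by
  rintro rfl
  rcases h with ⟨hl, -⟩ | ⟨hl, -⟩ <;> simp at hl

theorem ne_nil_right (h : ContinuationEquiv k τ₁ τ₂) : τ₂ ≠ [] :=
  h.symm.ne_nil_left

theorem lastW_eq (h : ContinuationEquiv k τ₁ τ₂) : lastW τ₁ = lastW τ₂ := by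
  rcases h with ⟨-, rfl⟩ | ⟨-, -, he⟩
  · rfl
  · exact congrArg (·.2.2) (descEl_eq_of_bDesc_eq he)

theorem setOf_mem_dropLast_eq (h : ContinuationEquiv k τ₁ τ₂) :
    {w | w ∈ τ₁.dropLast} = {w | w ∈ τ₂.dropLast} := by
  rcases h with ⟨-, rfl⟩ | ⟨hl₁, hl₂, he⟩
  · rfl
  · obtain ⟨hhead, hint, -⟩ := descEl_eq_iff.mp (descEl_eq_of_bDesc_eq he)
    rw [setOf_mem_dropLast hl₁, setOf_mem_dropLast hl₂, hhead, hint]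

theorem exists_prefix (h : ContinuationEquiv (k + 1) τ₁ τ₂)
    (hτ' : τ' <+: τ₁ ∧ τ' ≠ τ₁ ∧ τ' ≠ []) :
    ∃ τ₂', (τ₂' <+: τ₂ ∧ τ₂' ≠ τ₂ ∧ τ₂' ≠ []) ∧ ContinuationEquiv k τ' τ₂' := by
  obtain ⟨hpre, hne, hnil⟩ := hτ'
  have hpos := List.length_pos_of_ne_nil hnil
  rcases h with ⟨hl, rfl⟩ | ⟨hl₁, hl₂, he⟩
  · exact absurd (hpre.eq_of_length (by have := hpre.length_le; omega)) hne
  by_cases hl : τ'.length = 1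
  · obtain ⟨a, rfl⟩ := List.length_eq_one_iff.mp hl
    obtain ⟨t, rfl⟩ := hpre
    obtain ⟨b, u, rfl⟩ : ∃ b u, τ₂ = b :: u := List.exists_cons_of_ne_nil (List.ne_nil_of_length_pos (by omega))
    obtain rfl : a = b := (descEl_eq_iff.mp (descEl_eq_of_bDesc_eq he)).1
    refine ⟨[a], ⟨⟨u, rfl⟩, ?_, by simp⟩, Or.inl ⟨rfl, rfl⟩⟩
    rintro ⟨⟩
    simp at hl₂
  · obtain ⟨τ₂', ⟨hpre₂, hne₂, hl₂'⟩, he'⟩ :=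
      exists_properPrefix_bDesc_eq he ⟨hpre, hne, by omega⟩
    refine ⟨τ₂', ⟨hpre₂, hne₂, ?_⟩, Or.inr ⟨by omega, hl₂', he'⟩⟩
    rintro rfl
    simp at hl₂'

end ContinuationEquiv

theorem descEl_append_eq (hρ₁ : 2 ≤ ρ₁.length) (hρ₂ : 2 ≤ ρ₂.length)
    (hρ : descEl ρ₁ = descEl ρ₂) (hτ : ContinuationEquiv k τ₁ τ₂) :
    descEl (ρ₁ ++ τ₁) = descEl (ρ₂ ++ τ₂) := by
  obtain ⟨hhead, hint, hlast⟩ := descEl_eq_iff.mp hρ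
  rw [descEl_append (List.ne_nil_of_length_pos (by omega)) hτ.ne_nil_left,
    descEl_append (List.ne_nil_of_length_pos (by omega)) hτ.ne_nil_right,
    setOf_mem_tail hρ₁, setOf_mem_tail hρ₂, hhead, hint, hlast, hτ.setOf_mem_dropLast_eq,
    hτ.lastW_eq]

theorem bDesc_append_eq (hρ₁ : 2 ≤ ρ₁.length) (hρ₂ : 2 ≤ ρ₂.length)
    (hρ : bDesc k ρ₁ = bDesc k ρ₂) (hτ : ContinuationEquiv k τ₁ τ₂) :
    bDesc k (ρ₁ ++ τ₁) = bDesc k (ρ₂ ++ τ₂) := by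
  induction k generalizing ρ₁ ρ₂ τ₁ τ₂ with
  | zero => exact descEl_append_eq hρ₁ hρ₂ hρ hτ
  | succ k ih =>
    have matching : ∀ {ρ₁ ρ₂ τ₁ τ₂ : List W}, 2 ≤ ρ₁.length → 2 ≤ ρ₂.length →
        bDesc (k + 1) ρ₁ = bDesc (k + 1) ρ₂ → ContinuationEquiv (k + 1) τ₁ τ₂ →
        ∀ σ, ProperPrefix σ (ρ₁ ++ τ₁) →
          ∃ σ', ProperPrefix σ' (ρ₂ ++ τ₂) ∧ bDesc k σ = bDesc k σ' := by
      intro ρ₁ ρ₂ τ₁ τ₂ hρ₁ hρ₂ hρ hτ σ hσ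
      simp only [properPrefix_append_iff hρ₁ hτ.ne_nil_left,
        properPrefix_append_iff hρ₂ hτ.ne_nil_right] at hσ ⊢
      rcases hσ with hσ | rfl | ⟨τ', hτ', rfl⟩
      · obtain ⟨σ', hσ', he⟩ := exists_properPrefix_bDesc_eq hρ hσ
        exact ⟨σ', Or.inl hσ', he⟩
      · exact ⟨ρ₂, Or.inr (Or.inl rfl), bDesc_eq_of_bDesc_succ_eq hρ⟩
      · obtain ⟨τ₂', hτ₂', he⟩ := hτ.exists_prefix hτ'
        exact ⟨ρ₂ ++ τ₂', Or.inr (Or.inr ⟨τ₂', hτ₂', rfl⟩),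
          ih hρ₁ hρ₂ (bDesc_eq_of_bDesc_succ_eq hρ) he⟩
    exact bDesc_succ_eq_of_forall_exists
      (descEl_append_eq hρ₁ hρ₂ (descEl_eq_of_bDesc_eq hρ) hτ)
      (matching hρ₁ hρ₂ hρ hτ) (matching hρ₂ hρ₁ hρ.symm hτ.symm)

end Concatenation

theorem concat_bDesc_general [Nonempty W] (K : KripkeStructure AP W) (k : ℕ)
    (ρ₁ ρ₁' ρ₂ ρ₂' : List W)
    (h₁ : IsTrack K ρ₁) (h₁' : IsTrack K ρ₁') (h₂ : IsTrack K ρ₂) (h₂' : IsTrack K ρ₂')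
    (he₁ : bDesc k ρ₁ = bDesc k ρ₂) (he₂ : bDesc k ρ₁' = bDesc k ρ₂') :
    bDesc k (ρ₁ ++ ρ₁') = bDesc k (ρ₂ ++ ρ₂') :=
  bDesc_append_eq h₁.1 h₂.1 he₁ (Or.inr ⟨h₁'.1, h₂'.1, he₂⟩)

/-- concatenation preserves k-descriptor equivalence. -/
theorem concat_bDesc [Fintype W] [Nonempty W] (K : KripkeStructure AP W) (k : ℕ)
    (ρ₁ ρ₁' ρ₂ ρ₂' : List W)
    (h₁ : IsTrack K ρ₁) (h₁' : IsTrack K ρ₁') (h₂ : IsTrack K ρ₂) (h₂' : IsTrack K ρ₂')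
    (hd₁ : K.delta (lastW ρ₁) (headW ρ₁')) (hd₂ : K.delta (lastW ρ₂) (headW ρ₂'))
    (he₁ : bDesc k ρ₁ = bDesc k ρ₂) (he₂ : bDesc k ρ₁' = bDesc k ρ₂') :
    bDesc k (ρ₁ ++ ρ₁') = bDesc k (ρ₂ ++ ρ₂') :=
  concat_bDesc_general K k ρ₁ ρ₁' ρ₂ ρ₂' h₁ h₁' h₂ h₂' he₁ he₂
end

section
/- Let k ≥ 2 and let ρ_ds(i) and ρ_ds(j), with 0 ≤ i < j < |ρ_ds|, be two k-indistinguishable occurrences of the same descriptor element in a descriptor sequence ρ_ds. Then ρ_ds(i) and ρ_ds(j) are also (k−1)-indistinguishable. -/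
open Classical

universe u v

variable {AP : Type u} {W : Type v}

/-- The descriptor sequence of a track: `dsSeq ρ i` is the descriptor element of
the prefix `ρ(0, i+1)` of `ρ` (positions `0 ≤ i < |ρ| - 1`). -/
noncomputable def dsSeq [Nonempty W] (ρ : List W) (i : ℕ) : DescEl W :=
  descEl (ρ.take (i + 2))

/-- `DElm(ρ_ds(0, i-1))`: the descriptor elements occurring at positions `< i`. -/
noncomputable def DElmUpTo [Nonempty W] (ρ : List W) (i : ℕ) : Set (DescEl W) :=
  {d | ∃ ℓ < i, dsSeq ρ ℓ = d}

/-- k-indistinguishability of the occurrences at positions `i < j` of the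
descriptor sequence of `ρ` (defined for `k ≥ 1`). -/
def Indist [Nonempty W] (ρ : List W) : ℕ → ℕ → ℕ → Prop
  | 0, _, _ => False
  | 1, i, j => i < j ∧ j < ρ.length - 1 ∧ dsSeq ρ i = dsSeq ρ j ∧
      DElmUpTo ρ i = DElmUpTo ρ j
  | k + 2, i, j => i < j ∧ j < ρ.length - 1 ∧ dsSeq ρ i = dsSeq ρ j ∧
      ∀ ℓ, i ≤ ℓ → ℓ < j → ∃ ℓ' < i, Indist ρ (k + 1) ℓ' ℓ

section

variable [Nonempty W] {ρ : List W}

theorem Indist.dsSeq_eq {k i j : ℕ} (h : Indist ρ k i j) : dsSeq ρ i = dsSeq ρ j := by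
  match k with
  | 1 => exact h.2.2.1
  | _ + 2 => exact h.2.2.1

theorem DElmUpTo_eq_of_forall_exists_dsSeq_eq {i j : ℕ} (hij : i ≤ j)
    (h : ∀ ℓ, i ≤ ℓ → ℓ < j → ∃ ℓ' < i, dsSeq ρ ℓ' = dsSeq ρ ℓ) :
    DElmUpTo ρ i = DElmUpTo ρ j := by
  refine Set.Subset.antisymm (fun _ ⟨ℓ, hℓ, hd⟩ => ⟨ℓ, hℓ.trans_le hij, hd⟩) ?_
  rintro _ ⟨ℓ, hℓj, rfl⟩
  rcases lt_or_ge ℓ i with hℓi | hiℓ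
  · exact ⟨ℓ, hℓi, rfl⟩
  · exact h ℓ hiℓ hℓj

/- The witnesses `ℓ'` of level `k + 1` are weakened by induction; at level 1 only the equality
of descriptor elements they provide is needed, which makes the `DElm` windows agree. -/
theorem Indist.of_succ {k i j : ℕ} (h : Indist ρ (k + 2) i j) : Indist ρ (k + 1) i j := by
  induction k generalizing i j with
  | zero =>
    obtain ⟨hij, hj, hds, hwin⟩ := h
    refine ⟨hij, hj, hds, DElmUpTo_eq_of_forall_exists_dsSeq_eq hij.le fun ℓ hiℓ hℓj => ?_⟩
    obtain ⟨ℓ', hℓ', hind⟩ := hwin ℓ hiℓ hℓj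
    exact ⟨ℓ', hℓ', hind.dsSeq_eq⟩
  | succ k ih =>
    obtain ⟨hij, hj, hds, hwin⟩ := h
    refine ⟨hij, hj, hds, fun ℓ hiℓ hℓj => ?_⟩
    obtain ⟨ℓ', hℓ', hind⟩ := hwin ℓ hiℓ hℓj
    exact ⟨ℓ', hℓ', ih hind⟩

end

theorem indist_downward_general [Nonempty W]
    (ρ : List W) (k i j : ℕ) (hk : 2 ≤ k)
    (h : Indist ρ k i j) :
    Indist ρ (k - 1) i j := by
  obtain ⟨m, rfl⟩ : ∃ m, k = m + 2 := ⟨k - 2, by omega⟩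
  exact h.of_succ

/-- for `k ≥ 2`, k-indistinguishable occurrences are also
(k-1)-indistinguishable. -/
theorem indist_downward [Fintype W] [Nonempty W] (K : KripkeStructure AP W)
    (ρ : List W) (hρ : IsTrack K ρ) (k i j : ℕ) (hk : 2 ≤ k)
    (h : Indist ρ k i j) :
    Indist ρ (k - 1) i j :=
  indist_downward_general ρ k i j hk h
end

section
/- Let k ≥ 1 and let ρ_ds(i) and ρ_ds(m), with 0 ≤ i < m < |ρ_ds|, be two k-indistinguishable occurrences of the same descriptor element in a descriptor sequence ρ_ds. If ρ_ds(j) = ρ_ds(m) for some j with i < j < m, then ρ_ds(j) and ρ_ds(m) are also k-indistinguishable. -/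
open Classical

universe u v

variable {AP : Type u} {W : Type v}

/-! Shrinking the interval `[i, m]` to `[j, m]` preserves both clauses of `Indist`: the sets
`DElmUpTo ρ ·` grow with the position, so they are constant on `[i, m]` once they agree at the
ends; and for `k ≥ 2` every position of `[j, m)` already has a `(k-1)`-twin before `i < j`. -/

lemma DElmUpTo_mono [Nonempty W] (ρ : List W) : Monotone (DElmUpTo ρ) :=
  fun _ _ hab _ ⟨ℓ, hℓ, hd⟩ => ⟨ℓ, hℓ.trans_le hab, hd⟩

lemma DElmUpTo_eq_of_le_of_le [Nonempty W] {ρ : List W} {i j m : ℕ}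
    (him : DElmUpTo ρ i = DElmUpTo ρ m) (hij : i ≤ j) (hjm : j ≤ m) :
    DElmUpTo ρ j = DElmUpTo ρ m :=
  le_antisymm (DElmUpTo_mono ρ hjm) (him ▸ DElmUpTo_mono ρ hij)

theorem indist_between_general [Nonempty W]
    (ρ : List W) (k i j m : ℕ)
    (h : Indist ρ k i m) (hij : i < j) (hjm : j < m)
    (he : dsSeq ρ j = dsSeq ρ m) :
    Indist ρ k j m := by
  match k, h with
  | 1, ⟨_, hm, _, hD⟩ => exact ⟨hjm, hm, he, DElmUpTo_eq_of_le_of_le hD hij.le hjm.le⟩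
  | k + 2, ⟨_, hm, _, htwin⟩ =>
    refine ⟨hjm, hm, he, fun ℓ hjℓ hℓm => ?_⟩
    obtain ⟨ℓ', hℓ', hind⟩ := htwin ℓ (hij.le.trans hjℓ) hℓm
    exact ⟨ℓ', hℓ'.trans hij, hind⟩

/-- if `ρ_ds(i)` and `ρ_ds(m)` are k-indistinguishable and
`ρ_ds(j) = ρ_ds(m)` for some `i < j < m`, then `ρ_ds(j)` and `ρ_ds(m)` are also
k-indistinguishable. -/
theorem indist_between [Fintype W] [Nonempty W] (K : KripkeStructure AP W)
    (ρ : List W) (hρ : IsTrack K ρ) (k i j m : ℕ) (hk : 1 ≤ k)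
    (h : Indist ρ k i m) (hij : i < j) (hjm : j < m)
    (he : dsSeq ρ j = dsSeq ρ m) :
    Indist ρ k j m :=
  indist_between_general ρ k i j m h hij hjm he
end

section
/- Let ρ_ds be the descriptor sequence for a track ρ of a finite Kripke structure, and let ρ_ds(i) and ρ_ds(j), with 0 ≤ i < j < |ρ_ds|, be two occurrences of the same descriptor element. For every k ≥ 1, ρ_ds(i) and ρ_ds(j) are k-indistinguishable if and only if the prefixes ρ(0,i+1) and ρ(0,j+1) have the same B_k-descriptor (ρ(0,i+1) ∼k ρ(0,j+1)). -/
open Classical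

universe u v

variable {AP : Type u} {W : Type v}

/-!
The B_(k+1)-descriptor of the prefix `ρ(0, m+1)` is its descriptor element `ρ_ds(m)` together with
the set of B_k-descriptors of the prefixes `ρ(0, ℓ+1)`, `ℓ < m`. For `i < j` the set for `i` is
contained in the set for `j`, and they agree exactly when each prefix with `i ≤ ℓ < j` has the
same B_k-descriptor as some prefix with `ℓ' < i`; by induction on `k` that is
k-indistinguishability of `ρ_ds(ℓ')` and `ρ_ds(ℓ)`. For `k = 0` the set is `DElm(ρ_ds(0, m-1))`,
which is the base case of indistinguishability.
-/

theorem Set.image_Iio_eq_image_Iio_iff {α : Type*} (f : ℕ → α) {i j : ℕ} (hij : i ≤ j) :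
    f '' Set.Iio i = f '' Set.Iio j ↔ ∀ ℓ, i ≤ ℓ → ℓ < j → ∃ ℓ' < i, f ℓ' = f ℓ := by
  rw [← (Set.image_mono (Set.Iio_subset_Iio hij)).ge_iff_eq, Set.image_subset_iff]
  refine ⟨fun h ℓ _ hℓj => h hℓj, fun h ℓ hℓj => ?_⟩
  rcases lt_or_ge ℓ i with hℓi | hiℓ
  · exact ⟨ℓ, hℓi, rfl⟩
  · exact h ℓ hiℓ hℓj

theorem properPrefix_take_iff {ρ σ : List W} {m : ℕ} (hm : m + 2 ≤ ρ.length) :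
    ProperPrefix σ (ρ.take (m + 2)) ↔ ∃ ℓ < m, ρ.take (ℓ + 2) = σ := by
  have hlen : (ρ.take (m + 2)).length = m + 2 := List.length_take_of_le hm
  constructor
  · rintro ⟨hpre, hne, hσ⟩
    have hσρ : σ = ρ.take σ.length :=
      List.prefix_iff_eq_take.mp (hpre.trans (List.take_prefix _ _))
    have hσm : σ.length < m + 2 :=
      lt_of_le_of_ne (hlen ▸ hpre.length_le) fun h => hne (by rw [hσρ, h])
    exact ⟨σ.length - 2, by omega, by rw [Nat.sub_add_cancel hσ, ← hσρ]⟩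
  · rintro ⟨ℓ, hℓ, rfl⟩
    have hℓlen : (ρ.take (ℓ + 2)).length = ℓ + 2 := List.length_take_of_le (by omega)
    refine ⟨List.take_prefix_take_left (by omega), fun h => ?_, by omega⟩
    have := congrArg List.length h
    omega

theorem bDesc_succ_take [Nonempty W] {ρ : List W} {m : ℕ} (k : ℕ) (hm : m + 2 ≤ ρ.length) :
    bDesc (k + 1) (ρ.take (m + 2)) =
      (dsSeq ρ m, (fun ℓ => bDesc k (ρ.take (ℓ + 2))) '' Set.Iio m) := by
  refine Prod.ext rfl (Set.ext fun d => ⟨?_, ?_⟩)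
  · rintro ⟨σ, hσ, rfl⟩
    obtain ⟨ℓ, hℓ, rfl⟩ := (properPrefix_take_iff hm).1 hσ
    exact ⟨ℓ, hℓ, rfl⟩
  · rintro ⟨ℓ, hℓ, rfl⟩
    exact ⟨_, (properPrefix_take_iff hm).2 ⟨ℓ, hℓ, rfl⟩, rfl⟩

theorem bDesc_succ_take_eq_iff [Nonempty W] {ρ : List W} {i j : ℕ} (k : ℕ)
    (hi : i + 2 ≤ ρ.length) (hj : j + 2 ≤ ρ.length) :
    bDesc (k + 1) (ρ.take (i + 2)) = bDesc (k + 1) (ρ.take (j + 2)) ↔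
      dsSeq ρ i = dsSeq ρ j ∧
        (fun ℓ => bDesc k (ρ.take (ℓ + 2))) '' Set.Iio i =
          (fun ℓ => bDesc k (ρ.take (ℓ + 2))) '' Set.Iio j := by
  rw [bDesc_succ_take k hi, bDesc_succ_take k hj]
  exact Prod.ext_iff

theorem indist_succ_iff_bDesc_take_eq [Nonempty W] {ρ : List W} (n : ℕ) {i j : ℕ}
    (hij : i < j) (hj : j < ρ.length - 1) :
    Indist ρ (n + 1) i j ↔ bDesc (n + 1) (ρ.take (i + 2)) = bDesc (n + 1) (ρ.take (j + 2)) := by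
  induction n generalizing i j with
  | zero =>
    rw [bDesc_succ_take_eq_iff 0 (by omega) (by omega)]
    change _ ∧ _ ∧ _ ∧ DElmUpTo ρ i = DElmUpTo ρ j ↔ _
    simp only [hij, hj, true_and]
    rfl
  | succ n ih =>
    rw [bDesc_succ_take_eq_iff (n + 1) (by omega) (by omega),
      Set.image_Iio_eq_image_Iio_iff _ hij.le]
    change _ ∧ _ ∧ _ ∧ (∀ ℓ, i ≤ ℓ → ℓ < j → ∃ ℓ' < i, Indist ρ (n + 1) ℓ' ℓ) ↔ _
    simp only [hij, hj, true_and]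
    refine and_congr_right fun _ => forall₃_congr fun ℓ hiℓ hℓj =>
      exists_congr fun ℓ' => and_congr_right fun hℓ' => ih (by omega) (by omega)

theorem indist_iff_bDesc_general [Nonempty W] (ρ : List W) (k i j : ℕ) (hk : 1 ≤ k)
    (hij : i < j) (hj : j < ρ.length - 1) :
    Indist ρ k i j ↔ bDesc k (ρ.take (i + 2)) = bDesc k (ρ.take (j + 2)) := by
  obtain ⟨n, rfl⟩ := Nat.exists_eq_add_of_le' hk
  exact indist_succ_iff_bDesc_take_eq n hij hj

/-- two occurrences `ρ_ds(i)` and `ρ_ds(j)` (`i < j`) of the same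
descriptor element are k-indistinguishable iff the prefixes `ρ(0, i+1)` and
`ρ(0, j+1)` have the same B_k-descriptor. -/
theorem indist_iff_bDesc [Fintype W] [Nonempty W] (K : KripkeStructure AP W)
    (ρ : List W) (hρ : IsTrack K ρ) (k i j : ℕ) (hk : 1 ≤ k)
    (hij : i < j) (hj : j < ρ.length - 1) (he : dsSeq ρ i = dsSeq ρ j) :
    Indist ρ k i j ↔ bDesc k (ρ.take (i + 2)) = bDesc k (ρ.take (j + 2)) :=
  indist_iff_bDesc_general ρ k i j hk hij hj
end

section
/- Let ρ_ds(i), ρ_ds(j), and ρ_ds(m), with 0 ≤ i < j < m < |ρ_ds|, be three occurrences of the same descriptor element in a descriptor sequence ρ_ds. If the pair ρ_ds(i), ρ_ds(j) and the pair ρ_ds(j), ρ_ds(m) are both k-indistinguishable, for some k ≥ 1, then ρ_ds(i) and ρ_ds(m) are also k-indistinguishable. -/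
open Classical

universe u v

variable {AP : Type u} {W : Type v}

theorem Indist.trans [Nonempty W] {ρ : List W} :
    ∀ {k a b c : ℕ}, Indist ρ k a b → Indist ρ k b c → Indist ρ k a c
  | 0, _, _, _, h, _ => h.elim
  | 1, _, _, _, ⟨hab, _, dab, Dab⟩, ⟨hbc, hcL, dbc, Dbc⟩ =>
    ⟨hab.trans hbc, hcL, dab.trans dbc, Dab.trans Dbc⟩
  | k + 2, a, b, c, ⟨hab, _, dab, H1⟩, ⟨hbc, hcL, dbc, H2⟩ => by
    refine ⟨hab.trans hbc, hcL, dab.trans dbc, fun ℓ haℓ hℓc => ?_⟩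
    rcases lt_or_ge ℓ b with hℓb | hbℓ
    · exact H1 ℓ haℓ hℓb
    -- A witness `ℓ' < b` for `ℓ` that is not yet below `a` has itself a witness below `a`;
    -- the two are chained by transitivity at level `k + 1`.
    obtain ⟨ℓ', hℓ'b, hℓ'ℓ⟩ := H2 ℓ hbℓ hℓc
    rcases lt_or_ge ℓ' a with hℓ'a | haℓ'
    · exact ⟨ℓ', hℓ'a, hℓ'ℓ⟩
    obtain ⟨ℓ'', hℓ''a, hℓ''ℓ'⟩ := H1 ℓ' haℓ' hℓ'b
    exact ⟨ℓ'', hℓ''a, hℓ''ℓ'.trans hℓ'ℓ⟩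

theorem indist_trans_general [Nonempty W]
    (ρ : List W) (k i j m : ℕ)
    (h1 : Indist ρ k i j) (h2 : Indist ρ k j m) :
    Indist ρ k i m :=
  h1.trans h2

/-- k-indistinguishability is transitive on occurrences of the same
descriptor element. -/
theorem indist_trans [Fintype W] [Nonempty W] (K : KripkeStructure AP W)
    (ρ : List W) (hρ : IsTrack K ρ) (k i j m : ℕ) (hk : 1 ≤ k)
    (hij : i < j) (hjm : j < m) (hm : m < ρ.length - 1)
    (hdij : dsSeq ρ i = dsSeq ρ j) (hdjm : dsSeq ρ j = dsSeq ρ m)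
    (h1 : Indist ρ k i j) (h2 : Indist ρ k j m) :
    Indist ρ k i m :=
  indist_trans_general ρ k i j m h1 h2
end

section
/- Let K=(AP,W,δ,μ,w0) be a finite Kripke structure. For each track ρ of K, associated with a descriptor element d, there exists a track ρ' of K, associated with the same descriptor element d, such that |ρ'| ≤ 2 + |W|². -/
open Classical

universe u v

variable {AP : Type u} {W : Type v}

/-! Write the internal states of a track as `w₁ ⋯ wₘ` and let `Sₖ = {w₁, …, wₖ}`. The sets `Sₖ`
form a chain, so `Sₖ` is determined by `|Sₖ| ∈ [1, |W|]`; hence if `m > |W|²` there are positions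
`a < b` with `w_a = w_b` and `S_a = S_b`. Cutting `w_{a+1} ⋯ w_b` out of the track leaves a track
(as `w_a = w_b`) with the same endpoints and, since `w_{a+1}, …, w_b ∈ S_a`, the same internal
states. So a shortest track with a given descriptor element has length at most `2 + |W|²`. -/

theorem List.IsChain.of_append_loop {α : Type*} {R : α → α → Prop} {A t C : List α}
    (h : (A ++ t ++ C).IsChain R) (hloop : (A ++ t).getLast? = A.getLast?) :
    (A ++ C).IsChain R := by
  rw [List.isChain_append] at h ⊢
  obtain ⟨hAt, hC, hlink⟩ := h
  exact ⟨(List.isChain_append.1 hAt).1, hC, hloop ▸ hlink⟩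

theorem List.exists_eq_cons_append_singleton {α : Type*} {ρ : List α} (h : 2 ≤ ρ.length) :
    ∃ a l b, ρ = a :: l ++ [b] := by
  match ρ, h with
  | a :: ρ', h =>
    obtain ⟨l, b, rfl⟩ := (List.eq_nil_or_concat ρ').resolve_left (by rintro rfl; simp at h)
    exact ⟨a, l, b, by simp⟩

theorem List.length_cons_append_singleton {α : Type*} (a b : α) (l : List α) :
    (a :: l ++ [b]).length = l.length + 2 := by
  simp

theorem List.exists_append_loop_of_toFinset_take_card_eq {α : Type*} [DecidableEq α]
    {l : List α} {i j : ℕ} (hij : i < j) (hj : j < l.length) (hget : l[i] = l[j])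
    (hcard : (l.take (j + 1)).toFinset.card = (l.take (i + 1)).toFinset.card) :
    ∃ p t r, l = p ++ t ++ r ∧ t ≠ [] ∧ (p ++ t).getLast? = p.getLast? ∧ ∀ y ∈ t, y ∈ p := by
  have hpt : l.take (i + 1) ++ (l.drop (i + 1)).take (j - i) = l.take (j + 1) := by
    rw [← List.take_add]; congr 1; omega
  refine ⟨l.take (i + 1), (l.drop (i + 1)).take (j - i), l.drop (j + 1), ?_, ?_, ?_, ?_⟩
  · rw [hpt, List.take_append_drop]
  · simp only [ne_eq, List.take_eq_nil_iff, List.drop_eq_nil_iff, not_or, not_le]; omega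
  · rw [hpt, List.getLast?_take, List.getLast?_take]
    simp [List.getElem?_eq_getElem (show i < l.length by omega), hget]
  · have hsame : (l.take (i + 1)).toFinset = (l.take (j + 1)).toFinset := by
      refine Finset.eq_of_subset_of_card_le (fun y hy => ?_) hcard.le
      simp only [List.mem_toFinset, ← hpt] at hy ⊢
      exact List.mem_append_left _ hy
    intro y hy
    rw [← List.mem_toFinset, hsame, List.mem_toFinset, ← hpt]
    exact List.mem_append_right _ hy

theorem List.exists_append_loop_of_card_sq_lt_length {α : Type*} [Fintype α] {l : List α}
    (hl : Fintype.card α ^ 2 < l.length) :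
    ∃ p t r, l = p ++ t ++ r ∧ t ≠ [] ∧ (p ++ t).getLast? = p.getLast? ∧ ∀ y ∈ t, y ∈ p := by
  let key : Fin l.length → α × ℕ := fun k => (l[k], (l.take (k + 1)).toFinset.card)
  have hmaps : Set.MapsTo key ↑(Finset.univ : Finset (Fin l.length))
      ↑(Finset.univ ×ˢ Finset.Icc 1 (Fintype.card α) : Finset (α × ℕ)) := by
    intro k _
    simp only [key, Finset.coe_product, Finset.coe_univ, Finset.coe_Icc, Set.mem_prod,
      Set.mem_univ, Set.mem_Icc, true_and]
    have hmem : l[k] ∈ (l.take (k + 1)).toFinset :=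
      List.mem_toFinset.2 (List.mem_take_iff_getElem.2 ⟨k, by omega, rfl⟩)
    exact ⟨Finset.card_pos.2 ⟨l[k], hmem⟩, Finset.card_le_univ _⟩
  have hcard : (Finset.univ ×ˢ Finset.Icc 1 (Fintype.card α) : Finset (α × ℕ)).card <
      (Finset.univ : Finset (Fin l.length)).card := by
    simpa [sq] using hl
  obtain ⟨i, -, j, -, hne, hkey⟩ := Finset.exists_ne_map_eq_of_card_lt_of_maps_to hcard hmaps
  simp only [key, Prod.mk.injEq] at hkey
  rcases Fin.lt_or_lt_of_ne hne with h | h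
  · exact exists_append_loop_of_toFinset_take_card_eq h j.2 hkey.1 hkey.2.symm
  · exact exists_append_loop_of_toFinset_take_card_eq h i.2 hkey.1.symm hkey.2

theorem intStates_cons_append_singleton (a b : W) (l : List W) :
    intStates (a :: l ++ [b]) = {w | w ∈ l} := by
  simp [intStates]

theorem descEl_cons_append_singleton [Nonempty W] (a b : W) (l : List W) :
    descEl (a :: l ++ [b]) = (a, {w | w ∈ l}, b) := by
  rw [descEl, intStates_cons_append_singleton, headW, lastW, List.getLastD_concat]
  rfl

theorem isTrack_iff {K : KripkeStructure AP W} {ρ : List W} :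
    IsTrack K ρ ↔ 2 ≤ ρ.length ∧ ρ.IsChain K.delta :=
  Iff.rfl

theorem IsTrack.exists_shorter [Fintype W] [Nonempty W] {K : KripkeStructure AP W}
    {ρ : List W} (hρ : IsTrack K ρ) (hlong : 2 + Fintype.card W ^ 2 < ρ.length) :
    ∃ ρ', IsTrack K ρ' ∧ descEl ρ' = descEl ρ ∧ ρ'.length < ρ.length := by
  simp only [isTrack_iff] at hρ ⊢
  obtain ⟨a, l, b, rfl⟩ := List.exists_eq_cons_append_singleton hρ.1
  obtain ⟨p, t, r, rfl, ht, hloop, hsub⟩ :=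
    List.exists_append_loop_of_card_sq_lt_length (l := l)
      (by rw [List.length_cons_append_singleton] at hlong; omega)
  have hlen : (a :: (p ++ r) ++ [b]).length < (a :: (p ++ t ++ r) ++ [b]).length := by
    simpa using List.length_pos_iff.2 ht
  refine ⟨a :: (p ++ r) ++ [b], ⟨by rw [List.length_cons_append_singleton]; omega, ?_⟩, ?_, hlen⟩
  · have hchain : ((a :: p) ++ t ++ (r ++ [b])).IsChain K.delta := by simpa using hρ.2
    have hloop' : (a :: p ++ t).getLast? = (a :: p).getLast? := by
      rw [List.cons_append, List.getLast?_cons, List.getLast?_cons, hloop]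
    simpa using hchain.of_append_loop hloop'
  · rw [descEl_cons_append_singleton, descEl_cons_append_singleton]
    congr 2
    ext w
    simp only [Set.mem_ofPred_eq, List.mem_append]
    have hw := hsub w
    tauto

/-- every descriptor element witnessed by a track is witnessed by a
track of length at most `2 + |W|²`. -/
theorem descEl_short_witness [Fintype W] [Nonempty W] (K : KripkeStructure AP W)
    (ρ : List W) (hρ : IsTrack K ρ) :
    ∃ ρ' : List W, IsTrack K ρ' ∧ descEl ρ' = descEl ρ ∧
      ρ'.length ≤ 2 + Fintype.card W ^ 2 := by
  have hwit : ∃ n, ∃ ρ', IsTrack K ρ' ∧ descEl ρ' = descEl ρ ∧ ρ'.length = n :=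
    ⟨_, ρ, hρ, rfl, rfl⟩
  obtain ⟨ρ', hρ', hdesc, hlen⟩ := Nat.find_spec hwit
  refine ⟨ρ', hρ', hdesc, not_lt.1 fun hlong => ?_⟩
  obtain ⟨σ, hσ, hσdesc, hσlen⟩ := hρ'.exists_shorter hlong
  exact Nat.find_min hwit (hlen ▸ hσlen) ⟨σ, hσ, hσdesc.trans hdesc, rfl⟩
end

section
/- For any track ρ of a finite Kripke structure K=(AP,W,δ,μ,w0), the set DElm(ρ_ds) of descriptor elements occurring in the descriptor sequence ρ_ds of ρ has cardinality at most 1 + |W|². -/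
open Classical

universe u v

variable {AP : Type u} {W : Type v}

/-! All descriptors of a track `a :: t` have initial state `a`. The internal states of the
prefixes grow along the track, so the set of internal states of a descriptor is determined by its
size. Apart from the first descriptor, whose set of internal states is empty, a descriptor is
therefore determined by a size in `1, …, |W|` and a final state in `W`. -/

section Chains

variable {α β ι : Type*} [Finite α]

theorem Monotone.eq_of_ncard_eq [LinearOrder ι] {S : ι → Set α} (hS : Monotone S) {i j : ι}
    (h : (S i).ncard = (S j).ncard) : S i = S j := by
  rcases le_total i j with hij | hij
  · exact Set.eq_of_subset_of_ncard_le (hS hij) h.ge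
  · exact (Set.eq_of_subset_of_ncard_le (hS hij) h.le).symm

theorem Monotone.ncard_image_prod_le [Finite β] [LinearOrder ι] {S : ι → Set α}
    (hS : Monotone S) (f : ι → β) {I : Set ι} (hI : ∀ i ∈ I, (S i).Nonempty) :
    ((fun i ↦ (S i, f i)) '' I).ncard ≤ Nat.card α * Nat.card β := by
  have hcard :
      (Set.Icc 1 (Nat.card α) ×ˢ (Set.univ : Set β)).ncard = Nat.card α * Nat.card β := by
    rw [Set.ncard_prod, Set.ncard_univ, Set.ncard_eq_toFinset_card', Set.toFinset_Icc,
      Nat.card_Icc, Nat.add_sub_cancel]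
  rw [← hcard]
  refine Set.ncard_le_ncard_of_injOn (fun p ↦ (p.1.ncard, p.2)) ?_ ?_ (Set.toFinite _)
  · rintro _ ⟨i, hi, rfl⟩
    exact ⟨⟨(Set.ncard_pos (Set.toFinite _)).2 (hI i hi), Set.ncard_le_card _⟩, trivial⟩
  · rintro _ ⟨i, -, rfl⟩ _ ⟨j, -, rfl⟩ h
    simp only [Prod.mk.injEq] at h ⊢
    exact ⟨hS.eq_of_ncard_eq h.1, h.2⟩

end Chains

theorem List.monotone_setOf_mem_take {α : Type*} (t : List α) :
    Monotone fun i ↦ {w | w ∈ t.take i} :=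
  fun _ _ hij _ hw ↦ (List.take_prefix_take_left hij).subset hw

theorem intStates_cons_take (a : W) (t : List W) {i : ℕ} (hi : i < t.length) :
    intStates ((a :: t).take (i + 2)) = {w | w ∈ t.take i} := by
  rw [intStates, List.take_succ_cons, List.drop_one, List.tail_cons, List.dropLast_eq_take,
    List.take_take, List.length_take, show min (min (i + 1) t.length - 1) (i + 1) = i by omega]

theorem dsSeq_cons [Nonempty W] (a : W) (t : List W) {i : ℕ} (hi : i < t.length) :
    dsSeq (a :: t) i = (a, {w | w ∈ t.take i}, lastW ((a :: t).take (i + 2))) := by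
  rw [dsSeq, descEl, intStates_cons_take a t hi]
  rfl

theorem ncard_dsSeq_cons_le [Fintype W] [Nonempty W] (a : W) (t : List W) :
    {d : DescEl W | ∃ i < t.length, dsSeq (a :: t) i = d}.ncard ≤ 1 + Fintype.card W ^ 2 := by
  set S := fun i ↦ {w | w ∈ t.take i}
  set l := fun i ↦ lastW ((a :: t).take (i + 2))
  set D := (fun i ↦ (S i, l i)) '' Set.Ioo 0 t.length
  have hsub : {d : DescEl W | ∃ i < t.length, dsSeq (a :: t) i = d} ⊆
      insert (dsSeq (a :: t) 0) (Prod.mk a '' D) := by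
    rintro _ ⟨i, hi, rfl⟩
    rcases Nat.eq_zero_or_pos i with rfl | hpos
    · exact Set.mem_insert _ _
    · exact Or.inr ⟨_, ⟨i, ⟨hpos, hi⟩, rfl⟩, (dsSeq_cons a t hi).symm⟩
  have hne : ∀ i ∈ Set.Ioo 0 t.length, (S i).Nonempty := fun i ⟨hpos, hi⟩ ↦
    ⟨t[0], List.mem_iff_getElem.2 ⟨0, by simp only [List.length_take]; omega, by simp⟩⟩
  calc _ ≤ (insert (dsSeq (a :: t) 0) (Prod.mk a '' D)).ncard :=
        Set.ncard_le_ncard hsub (Set.toFinite _)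
    _ ≤ (Prod.mk a '' D).ncard + 1 := Set.ncard_insert_le _ _
    _ = D.ncard + 1 := by rw [Set.ncard_image_of_injective _ (Prod.mk_right_injective a)]
    _ ≤ Nat.card W * Nat.card W + 1 := by
        gcongr
        exact (List.monotone_setOf_mem_take t).ncard_image_prod_le l hne
    _ = 1 + Fintype.card W ^ 2 := by rw [Nat.card_eq_fintype_card]; ring

theorem DElm_card_le_general [Fintype W] [Nonempty W]
    (ρ : List W) :
    Set.ncard {d : DescEl W | ∃ i < ρ.length - 1, dsSeq ρ i = d} ≤
      1 + Fintype.card W ^ 2 := by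
  cases ρ with
  | nil => simp
  | cons a t => simpa using ncard_dsSeq_cons_le a t

/-- the set of descriptor elements occurring in the descriptor
sequence of a track has cardinality at most `1 + |W|²`. -/
theorem DElm_card_le [Fintype W] [Nonempty W] (K : KripkeStructure AP W)
    (ρ : List W) (hρ : IsTrack K ρ) :
    Set.ncard {d : DescEl W | ∃ i < ρ.length - 1, dsSeq ρ i = d} ≤
      1 + Fintype.card W ^ 2 :=
  DElm_card_le_general ρ
end

section
/- Let ψ be a formula of the HS fragment AB̄, let K=(AP,W,δ,μ,w0) and K'=(AP',W',δ',μ',w0') be finite Kripke structures, and let ρ be a track over K and ρ' a track over K' such that L(K|pℓ(ψ), ρ) = L(K'|pℓ(ψ), ρ') and reach(K|pℓ(ψ), lst(ρ)) is isomorphic to reach(K'|pℓ(ψ), lst(ρ')). Then K,ρ ⊨ ψ if and only if K',ρ' ⊨ ψ. -/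
open Classical

universe u v

variable {AP : Type u} {W : Type v}

/-- The set of proposition letters occurring in a formula. -/
def props : HSFormula AP → Set AP
  | .prop p => {p}
  | .neg φ => props φ
  | .and φ ψ => props φ ∪ props ψ
  | .modA φ => props φ
  | .modAbar φ => props φ
  | .modB φ => props φ
  | .modBbar φ => props φ
  | .modEbar φ => props φ

/-- Membership in the HS fragment AB̄ (only `⟨A⟩` and `⟨B̄⟩` modalities). -/
inductive InABbar : HSFormula AP → Prop
  | prop (p : AP) : InABbar (.prop p)
  | neg {φ} : InABbar φ → InABbar (.neg φ)
  | and {φ ψ} : InABbar φ → InABbar ψ → InABbar (.and φ ψ)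
  | modA {φ} : InABbar φ → InABbar (.modA φ)
  | modBbar {φ} : InABbar φ → InABbar (.modBbar φ)

/-- `K|P`: the labelling of every state is restricted to `P`. -/
def KripkeStructure.restrict (K : KripkeStructure AP W) (P : Set AP) :
    KripkeStructure AP W :=
  { K with mu := fun w => K.mu w ∩ P }

/-- `reach(K, v)`: the substructure of the states reachable from `v`, with initial
state `v`. -/
def KripkeStructure.reach (K : KripkeStructure AP W) (v : W) :
    KripkeStructure AP {w : W // Relation.ReflTransGen K.delta v w} where
  delta a b := K.delta a.1 b.1
  leftTotal a := by
    obtain ⟨w', h⟩ := K.leftTotal a.1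
    exact ⟨⟨w', a.2.tail h⟩, h⟩
  mu a := K.mu a.1
  init := ⟨v, Relation.ReflTransGen.refl⟩

/-- Isomorphism of Kripke structures. -/
structure KripkeIso {AP : Type u} {W₁ W₂ : Type v}
    (K₁ : KripkeStructure AP W₁) (K₂ : KripkeStructure AP W₂) where
  toEquiv : W₁ ≃ W₂
  map_init : toEquiv K₁.init = K₂.init
  map_delta : ∀ a b, K₁.delta a b ↔ K₂.delta (toEquiv a) (toEquiv b)
  map_mu : ∀ a, K₁.mu a = K₂.mu (toEquiv a)

/-- `L(K, ρ) = ⋂_{w ∈ states(ρ)} μ(w)`. -/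
def trackLabel (K : KripkeStructure AP W) (ρ : List W) : Set AP :=
  {p | ∀ w ∈ ρ, p ∈ K.mu w}

/-! A formula reads only the letters of `pℓ(ψ)`, so it holds in `K` iff it holds in
`K|pℓ(ψ)`. An isomorphism between the parts of `K|pℓ(ψ)` and `K'|pℓ(ψ)` reachable from the last
states of the two tracks is in particular a bisimulation relating those states. The modalities
`⟨A⟩` and `⟨B̄⟩` only look at tracks that continue from the last state, and every such
continuation can be copied step by step along a bisimulation into one with the same labels
whose last state is again related; so, by induction on the formula, tracks with the same label
and bisimilar last states satisfy the same AB̄ formulas. -/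

theorem List.Forall₂.rel_getLast? {α β : Type*} {R : α → β → Prop} :
    ∀ {l₁ : List α} {l₂ : List β}, Forall₂ R l₁ l₂ → Option.Rel R l₁.getLast? l₂.getLast?
  | [], [], .nil => .none
  | [_], [_], .cons h .nil => .some h
  | _ :: _ :: _, _ :: _ :: _, .cons _ h => by simpa using h.rel_getLast?

theorem Option.Rel.flip {α β : Type*} {R : α → β → Prop} :
    ∀ {a : Option α} {b : Option β}, Option.Rel R a b → Option.Rel (flip R) b a
  | _, _, .some h => .some h
  | _, _, .none => .none

theorem IsTrack.ne_nil {K : KripkeStructure AP W} {ρ : List W} (h : IsTrack K ρ) : ρ ≠ [] := by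
  rintro rfl
  exact absurd h.1 (by simp)

theorem trackLabel_cons (K : KripkeStructure AP W) (w : W) (l : List W) :
    trackLabel K (w :: l) = K.mu w ∩ trackLabel K l := by
  ext p
  simp [trackLabel]

theorem trackLabel_append (K : KripkeStructure AP W) (l₁ l₂ : List W) :
    trackLabel K (l₁ ++ l₂) = trackLabel K l₁ ∩ trackLabel K l₂ := by
  ext p
  simp [trackLabel, or_imp, forall_and]

theorem isTrack_restrict {K : KripkeStructure AP W} {P : Set AP} {ρ : List W} :
    IsTrack (K.restrict P) ρ ↔ IsTrack K ρ :=
  Iff.rfl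

theorem sat_restrict {K : KripkeStructure AP W} {P : Set AP} {ψ : HSFormula AP}
    (hP : props ψ ⊆ P) (ρ : List W) : sat (K.restrict P) ψ ρ ↔ sat K ψ ρ := by
  induction ψ generalizing ρ with
  | prop p => simp [sat, KripkeStructure.restrict, hP rfl]
  | and φ ψ ihφ ihψ =>
    rw [props, Set.union_subset_iff] at hP
    exact and_congr (ihφ hP.1 ρ) (ihψ hP.2 ρ)
  | _ φ ih => simp only [sat, ih hP, isTrack_restrict]

section Bisimulation

variable {W' : Type*}

structure IsBisimulation (K : KripkeStructure AP W) (K' : KripkeStructure AP W')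
    (Z : W → W' → Prop) : Prop where
  mu_eq : ∀ {w w'}, Z w w' → K.mu w = K'.mu w'
  forth : ∀ {w w' x}, Z w w' → K.delta w x → ∃ x', K'.delta w' x' ∧ Z x x'
  back : ∀ {w w' x'}, Z w w' → K'.delta w' x' → ∃ x, K.delta w x ∧ Z x x'

structure TrackMatch (K : KripkeStructure AP W) (K' : KripkeStructure AP W')
    (Z : W → W' → Prop) (ρ : List W) (ρ' : List W') : Prop where
  isTrack_left : IsTrack K ρ
  isTrack_right : IsTrack K' ρ'
  rel_getLast? : Option.Rel Z ρ.getLast? ρ'.getLast?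
  trackLabel_eq : trackLabel K ρ = trackLabel K' ρ'

variable {K : KripkeStructure AP W} {K' : KripkeStructure AP W'} {Z : W → W' → Prop}

theorem TrackMatch.symm {ρ : List W} {ρ' : List W'} (h : TrackMatch K K' Z ρ ρ') :
    TrackMatch K' K (flip Z) ρ' ρ where
  isTrack_left := h.isTrack_right
  isTrack_right := h.isTrack_left
  rel_getLast? := h.rel_getLast?.flip
  trackLabel_eq := h.trackLabel_eq.symm

namespace IsBisimulation

theorem symm (hZ : IsBisimulation K K' Z) : IsBisimulation K' K (flip Z) :=
  ⟨fun h => (hZ.mu_eq h).symm, hZ.back, hZ.forth⟩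

theorem trackLabel_eq (hZ : IsBisimulation K K' Z) :
    ∀ {l : List W} {l' : List W'}, List.Forall₂ Z l l' → trackLabel K l = trackLabel K' l'
  | [], [], .nil => by simp [trackLabel]
  | _ :: _, _ :: _, .cons h hl => by
    rw [trackLabel_cons, trackLabel_cons, hZ.mu_eq h, hZ.trackLabel_eq hl]

theorem exists_forall₂_isChain (hZ : IsBisimulation K K' Z) :
    ∀ {l : List W} {w : W} {w' : W'}, Z w w' → (w :: l).IsChain K.delta →
      ∃ l' : List W', List.Forall₂ Z l l' ∧ (w' :: l').IsChain K'.delta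
  | [], _, _, _, _ => ⟨[], .nil, .singleton _⟩
  | _ :: _, _, _, hw, hc => by
    rw [List.isChain_cons_cons] at hc
    obtain ⟨x', hx', hxx'⟩ := hZ.forth hw hc.1
    obtain ⟨l', hl, hc'⟩ := hZ.exists_forall₂_isChain hxx' hc.2
    exact ⟨x' :: l', .cons hxx' hl, List.isChain_cons_cons.2 ⟨hx', hc'⟩⟩

theorem trackMatch_of_forall₂ (hZ : IsBisimulation K K' Z) {σ : List W} {σ' : List W'}
    (hσ : IsTrack K σ) (hσ' : σ'.IsChain K'.delta) (h : List.Forall₂ Z σ σ') :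
    TrackMatch K K' Z σ σ' :=
  ⟨hσ, ⟨h.length_eq ▸ hσ.1, hσ'⟩, h.rel_getLast?, hZ.trackLabel_eq h⟩

variable {φ : HSFormula AP} {ρ : List W} {ρ' : List W'}

theorem sat_modA_of_sat (hZ : IsBisimulation K K' Z)
    (ih : ∀ σ σ', TrackMatch K K' Z σ σ' → sat K φ σ → sat K' φ σ')
    (hlast : Option.Rel Z ρ.getLast? ρ'.getLast?) :
    sat K (.modA φ) ρ → sat K' (.modA φ) ρ' := by
  rintro ⟨_ | ⟨w, τ⟩, hσ, hhead, hsat⟩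
  · exact (hσ.ne_nil rfl).elim
  rw [← hhead] at hlast
  obtain ⟨w', hw', hww'⟩ : ∃ w', ρ'.getLast? = some w' ∧ Z w w' := by
    revert hlast
    cases ρ'.getLast? <;> simp
  obtain ⟨τ', hτ, hc'⟩ := hZ.exists_forall₂_isChain hww' hσ.2
  have hmatch := hZ.trackMatch_of_forall₂ hσ hc' (.cons hww' hτ)
  exact ⟨w' :: τ', hmatch.isTrack_right, hw'.symm, ih _ _ hmatch hsat⟩

theorem sat_modBbar_of_sat (hZ : IsBisimulation K K' Z)
    (ih : ∀ σ σ', TrackMatch K K' Z σ σ' → sat K φ σ → sat K' φ σ')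
    (h : TrackMatch K K' Z ρ ρ') :
    sat K (.modBbar φ) ρ → sat K' (.modBbar φ) ρ' := by
  rintro ⟨_, hσ, ⟨⟨τ, rfl⟩, hne, -⟩, hsat⟩
  have hτ : τ ≠ [] := by rintro rfl; simp at hne
  obtain ⟨ρ₀, v, rfl⟩ : ∃ ρ₀ v, ρ = ρ₀ ++ [v] :=
    ⟨_, _, (List.dropLast_concat_getLast (h.isTrack_left.ne_nil)).symm⟩
  obtain ⟨ρ₀', v', rfl⟩ : ∃ ρ₀' v', ρ' = ρ₀' ++ [v'] :=
    ⟨_, _, (List.dropLast_concat_getLast (h.isTrack_right.ne_nil)).symm⟩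
  have hvv' : Z v v' := by simpa using h.rel_getLast?
  have hc : (v :: τ).IsChain K.delta := (List.append_assoc ρ₀ [v] τ ▸ hσ.2).right_of_append
  obtain ⟨τ', hττ', hc'⟩ := hZ.exists_forall₂_isChain hvv' hc
  have hτ' : τ' ≠ [] := by rintro rfl; exact hτ (List.forall₂_nil_right_iff.1 hττ')
  have hσ' : IsTrack K' (ρ₀' ++ [v'] ++ τ') :=
    ⟨le_trans h.isTrack_right.1 (by simp), h.isTrack_right.2.append_overlap hc' (by simp)⟩
  refine ⟨_, hσ', ⟨List.prefix_append _ _, by simpa using hτ', h.isTrack_right.1⟩,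
    ih _ _ ⟨hσ, hσ', ?_, ?_⟩ hsat⟩
  · rw [List.getLast?_append_of_ne_nil _ hτ, List.getLast?_append_of_ne_nil _ hτ']
    exact hττ'.rel_getLast?
  · rw [trackLabel_append K (ρ₀ ++ [v]), trackLabel_append K' (ρ₀' ++ [v']), h.trackLabel_eq,
      hZ.trackLabel_eq hττ']

theorem sat_iff (hZ : IsBisimulation K K' Z) {ψ : HSFormula AP} (hψ : InABbar ψ)
    (h : TrackMatch K K' Z ρ ρ') : sat K ψ ρ ↔ sat K' ψ ρ' := by
  induction hψ generalizing ρ ρ' with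
  | prop p => exact Set.ext_iff.mp h.trackLabel_eq p
  | neg _ ih => exact not_congr (ih h)
  | and _ _ ihφ ihψ => exact and_congr (ihφ h) (ihψ h)
  | modA _ ih =>
    exact ⟨hZ.sat_modA_of_sat (fun σ σ' hσ => (ih hσ).1) h.rel_getLast?,
      hZ.symm.sat_modA_of_sat (fun σ' σ hσ => (ih hσ.symm).2) h.symm.rel_getLast?⟩
  | modBbar _ ih =>
    exact ⟨hZ.sat_modBbar_of_sat (fun σ σ' hσ => (ih hσ).1) h,
      hZ.symm.sat_modBbar_of_sat (fun σ' σ hσ => (ih hσ.symm).2) h.symm⟩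

end IsBisimulation

end Bisimulation

namespace KripkeIso

variable {W' : Type v} {K : KripkeStructure AP W} {K' : KripkeStructure AP W'} {v : W} {v' : W'}

def reachRel (F : KripkeIso (K.reach v) (K'.reach v')) (w : W) (w' : W') : Prop :=
  ∃ h : Relation.ReflTransGen K.delta v w, (F.toEquiv ⟨w, h⟩).1 = w'

theorem reachRel_init (F : KripkeIso (K.reach v) (K'.reach v')) : F.reachRel v v' :=
  ⟨.refl, congrArg Subtype.val F.map_init⟩

theorem isBisimulation_reachRel (F : KripkeIso (K.reach v) (K'.reach v')) :
    IsBisimulation K K' F.reachRel where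
  mu_eq := by
    rintro w _ ⟨h, rfl⟩
    exact F.map_mu ⟨w, h⟩
  forth := by
    rintro w _ x ⟨h, rfl⟩ hx
    exact ⟨_, (F.map_delta ⟨w, h⟩ ⟨x, h.tail hx⟩).1 hx, h.tail hx, rfl⟩
  back := by
    rintro w _ x' ⟨h, rfl⟩ hx'
    set y := F.toEquiv.symm ⟨x', (F.toEquiv ⟨w, h⟩).2.tail hx'⟩
    refine ⟨y.1, (F.map_delta ⟨w, h⟩ y).2 ?_, y.2, ?_⟩
    · rw [F.toEquiv.apply_symm_apply]
      exact hx'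
    · simp [y]

end KripkeIso

theorem ABbar_invariance_general {AP : Type u} {W W' : Type v}
    (K : KripkeStructure AP W) (K' : KripkeStructure AP W')
    (ψ : HSFormula AP) (hψ : InABbar ψ)
    (ρ : List W) (ρ' : List W') (hρ : IsTrack K ρ) (hρ' : IsTrack K' ρ')
    (vρ : W) (vρ' : W') (hv : ρ.getLast? = some vρ) (hv' : ρ'.getLast? = some vρ')
    (hL : trackLabel (K.restrict (props ψ)) ρ = trackLabel (K'.restrict (props ψ)) ρ')
    (hiso : Nonempty (KripkeIso ((K.restrict (props ψ)).reach vρ)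
      ((K'.restrict (props ψ)).reach vρ'))) :
    sat K ψ ρ ↔ sat K' ψ ρ' := by
  obtain ⟨F⟩ := hiso
  have hmatch : TrackMatch (K.restrict (props ψ)) (K'.restrict (props ψ)) F.reachRel ρ ρ' :=
    ⟨hρ, hρ', by rw [hv, hv']; exact .some F.reachRel_init, hL⟩
  rw [← sat_restrict (K := K) subset_rfl, ← sat_restrict (K := K') subset_rfl]
  exact F.isBisimulation_reachRel.sat_iff hψ hmatch

/-- an AB̄ formula `ψ` cannot distinguish two tracks (possibly of
different Kripke structures) with the same labelling restricted to `pℓ(ψ)` and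
isomorphic reachable parts (restricted to `pℓ(ψ)`) from their final states. -/
theorem ABbar_invariance {AP : Type u} {W W' : Type v} [Fintype W] [Fintype W']
    (K : KripkeStructure AP W) (K' : KripkeStructure AP W')
    (ψ : HSFormula AP) (hψ : InABbar ψ)
    (ρ : List W) (ρ' : List W') (hρ : IsTrack K ρ) (hρ' : IsTrack K' ρ')
    (vρ : W) (vρ' : W') (hv : ρ.getLast? = some vρ) (hv' : ρ'.getLast? = some vρ')
    (hL : trackLabel (K.restrict (props ψ)) ρ = trackLabel (K'.restrict (props ψ)) ρ')
    (hiso : Nonempty (KripkeIso ((K.restrict (props ψ)).reach vρ)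
      ((K'.restrict (props ψ)).reach vρ'))) :
    sat K ψ ρ ↔ sat K' ψ ρ' :=
  ABbar_invariance_general K K' ψ hψ ρ ρ' hρ hρ' vρ vρ' hv hv' hL hiso
end

section
/- Let Var={x_1,…,x_n} with n ≥ 1 and let β be a quantifier-free Boolean formula over Var. Then β is satisfiable (by some truth assignment to Var) if and only if K_SAT^Var ⊭ ¬β, i.e., there exists an initial track ρ of K_SAT^Var such that K_SAT^Var, ρ ⊨ β under the homogeneity semantics. -/
open Classical

universe u v

variable {AP : Type u} {W : Type v}

/-- Quantifier-free Boolean formulas. -/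
inductive BForm (V : Type u) : Type u where
  | var (x : V)
  | neg (φ : BForm V)
  | and (φ ψ : BForm V)
  | or (φ ψ : BForm V)

/-- Evaluation of a Boolean formula under a truth assignment. -/
def BForm.eval {V : Type u} (α : V → Bool) : BForm V → Bool
  | .var x => α x
  | .neg φ => !(φ.eval α)
  | .and φ ψ => φ.eval α && ψ.eval α
  | .or φ ψ => φ.eval α || ψ.eval α

/-- The variables occurring in a Boolean formula. -/
def BForm.vars {V : Type u} : BForm V → Set V
  | .var x => {x}
  | .neg φ => φ.vars
  | .and φ ψ => φ.vars ∪ ψ.vars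
  | .or φ ψ => φ.vars ∪ ψ.vars

/-- States of `K_SAT` for `n` variables: `w i b` is `w_(i+1)^b`. -/
inductive SState (n : ℕ) : Type where
  | w0
  | w (i : Fin n) (b : Bool)

/-- The transition relation of `K_SAT`. -/
def sDelta (n : ℕ) : SState n → SState n → Prop
  | .w0, .w i _ => i.1 = 0
  | .w i b, .w i' b' => i'.1 = i.1 + 1 ∨ (i.1 = n - 1 ∧ i' = i ∧ b' = b)
  | _, _ => False

/-- The Kripke structure `K_SAT^Var` for variables `x_1, …, x_n` (`n ≥ 1`). -/
def KSAT (n : ℕ) (hn : 1 ≤ n) : KripkeStructure ℕ (SState n) where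
  delta := sDelta n
  leftTotal := by
    intro st
    match st with
    | .w0 => exact ⟨.w ⟨0, hn⟩ true, rfl⟩
    | .w i b =>
      by_cases h : i.1 + 1 < n
      · exact ⟨.w ⟨i.1 + 1, h⟩ true, Or.inl rfl⟩
      · exact ⟨.w i b, Or.inr ⟨by have := i.isLt; omega, rfl, rfl⟩⟩
  mu := fun st =>
    match st with
    | .w0 => {x | 1 ≤ x ∧ x ≤ n}
    | .w _ true => {x | 1 ≤ x ∧ x ≤ n}
    | .w i false => {x | (1 ≤ x ∧ x ≤ n) ∧ x ≠ i.1 + 1}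
  init := .w0

/-- A quantifier-free Boolean formula over variables `ℕ` read as an HS formula. -/
def BForm.toHS : BForm ℕ → HSFormula ℕ
  | .var x => .prop x
  | .neg φ => .neg φ.toHS
  | .and φ ψ => .and φ.toHS ψ.toHS
  | .or φ ψ => .neg (.and (.neg φ.toHS) (.neg ψ.toHS))

/-!
Under homogeneity a Boolean formula holds on a track `ρ` iff it is true under the assignment
that makes true exactly the letters holding at every state of `ρ`; in `K_SAT` the letter `x_i`
fails on an initial track iff the track visits `w_i^⊥`. Hence every initial track yields a
satisfying assignment of any formula it satisfies, and conversely an assignment `α` is realised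
by the track `w0 w_1^(α x_1) ⋯ w_n^(α x_n)`.
-/

theorem BForm.eval_congr {V : Type u} {α α' : V → Bool} :
    ∀ {β : BForm V}, Set.EqOn α α' β.vars → β.eval α = β.eval α'
  | .var _, h => h rfl
  | .neg _, h => congrArg (!·) (eval_congr h)
  | .and _ _, h => congrArg₂ (· && ·) (eval_congr fun _ hx => h (Or.inl hx))
      (eval_congr fun _ hx => h (Or.inr hx))
  | .or _ _, h => congrArg₂ (· || ·) (eval_congr fun _ hx => h (Or.inl hx))
      (eval_congr fun _ hx => h (Or.inr hx))

theorem sat_toHS_iff (K : KripkeStructure ℕ W) (β : BForm ℕ) (ρ : List W) :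
    sat K β.toHS ρ ↔ β.eval (fun x => decide (∀ w ∈ ρ, x ∈ K.mu w)) = true := by
  induction β with
  | var x => simp [sat, BForm.toHS, BForm.eval]
  | neg φ ih => simp [sat, BForm.toHS, BForm.eval, ih]
  | and φ ψ ihφ ihψ => simp [sat, BForm.toHS, BForm.eval, ihφ, ihψ]
  | or φ ψ ihφ ihψ =>
    simp only [sat, BForm.toHS, BForm.eval, ihφ, ihψ, Bool.or_eq_true]
    tauto

def assignmentTrack (n : ℕ) (α : ℕ → Bool) : List (SState n) :=
  .w0 :: List.ofFn fun i : Fin n => .w i (α (i + 1))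

theorem isTrack_assignmentTrack {n : ℕ} (hn : 1 ≤ n) (α : ℕ → Bool) :
    IsTrack (KSAT n hn) (assignmentTrack n α) := by
  refine ⟨by simpa [assignmentTrack], List.isChain_cons.2 ⟨?_, List.isChain_ofFn.2 ?_⟩⟩
  · intro w hw
    simp only [List.head?_eq_getElem?, List.getElem?_ofFn, Option.mem_def,
      Option.dite_none_right_eq_some, Option.some.injEq] at hw
    obtain ⟨_, rfl⟩ := hw
    rfl
  · intro i _
    exact Or.inl rfl

theorem mem_KSAT_mu_w_iff {n : ℕ} (hn : 1 ≤ n) {x : ℕ} (hx : 1 ≤ x ∧ x ≤ n) (i : Fin n)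
    (b : Bool) : x ∈ (KSAT n hn).mu (.w i b) ↔ (b = true ∨ x ≠ i + 1) := by
  cases b <;> simp [KSAT, hx]

theorem forall_mem_assignmentTrack_iff {n : ℕ} (hn : 1 ≤ n) (α : ℕ → Bool) {x : ℕ}
    (hx : 1 ≤ x ∧ x ≤ n) :
    (∀ w ∈ assignmentTrack n α, x ∈ (KSAT n hn).mu w) ↔ α x = true := by
  simp only [assignmentTrack, List.forall_mem_cons, List.forall_mem_ofFn_iff,
    mem_KSAT_mu_w_iff hn hx]
  refine ⟨fun ⟨_, h⟩ => ?_, fun hαx => ⟨hx, fun i => ?_⟩⟩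
  · obtain ⟨i, rfl⟩ : ∃ i : Fin n, x = i + 1 := ⟨⟨x - 1, by omega⟩, by simp; omega⟩
    simpa using h i
  · by_cases hi : x = i + 1
    · exact .inl (hi ▸ hαx)
    · exact .inr hi

/-- `β` is satisfiable iff `K_SAT^Var ⊭ ¬β`, i.e. iff some initial
track of `K_SAT^Var` satisfies `β` under the homogeneity semantics. -/
theorem sat_model_checking (n : ℕ) (hn : 1 ≤ n) (β : BForm ℕ)
    (hvars : ∀ x ∈ β.vars, 1 ≤ x ∧ x ≤ n) :
    (∃ α : ℕ → Bool, β.eval α = true) ↔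
      ∃ ρ : List (SState n), IsTrack (KSAT n hn) ρ ∧ ρ.head? = some .w0 ∧
        sat (KSAT n hn) β.toHS ρ := by
  constructor
  · rintro ⟨α, hα⟩
    refine ⟨assignmentTrack n α, isTrack_assignmentTrack hn α, rfl, ?_⟩
    rw [sat_toHS_iff, ← hα]
    refine BForm.eval_congr fun x hx => ?_
    rw [Bool.eq_iff_iff, decide_eq_true_iff]
    exact forall_mem_assignmentTrack_iff hn α (hvars x hx)
  · rintro ⟨ρ, -, -, hsat⟩
    exact ⟨_, (sat_toHS_iff _ β ρ).1 hsat⟩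
end
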